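/- arXiv:2212.09434 — 3 statements merged into one kernel-verified Lean document; each statement's English description precedes it below -/
import Mathlib

section
/- Let Γ = Σ_ℓ μ_ℓ f_ℓ⊗f_ℓ be a positive self-adjoint compact operator on a separable Hilbert space H with orthonormal eigenbasis (f_ℓ) and eigenvalues μ₁ > μ₂ ≥ μ₃ ≥ ... ≥ 0. Set g₁ = √μ₁ f₁, ρ = √μ₁ − √μ₂, and let R(h) = ‖Γ − h⊗h‖_HS². Suppose 8η < ρ. Then for every g with ‖g − g₁‖_H < η and every x in H, the Hessian satisfies ⟨x, R̈(g)(x)⟩_H ≥ 4√μ₁ (ρ − 8η) ‖x‖_H², where R̈(g) = 4(‖g‖_H² I + 2 g⊗g − Γ). -/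
/-!
Write `a = √μ₀`, `b = √μ₁` and `c = ⟪f₀, x⟫`. Expanding the eigenbasis, the quadratic form of `Γ`
is at most `b² ‖x‖² + (a² - b²) c²`. Since `g` is `η`-close to `a f₀`, we have `‖g‖ ≥ a - η` and
`2 ⟪g, x⟫² ≥ a² c² - 2 η² ‖x‖²`. Adding these up, the `a² c²` terms cancel and
`⟪x, R̈(g) x⟫ / 4 ≥ (a² - 2aη - η² - b²) ‖x‖²`, which exceeds `a (a - b - 8η) ‖x‖²` by
`b (a - b) + η (6a - η) ≥ 0`.
-/

open RealInnerProductSpace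

/-- The rank-one operator `h ⊗ f : g ↦ ⟨h,g⟩_H • f`. -/
noncomputable def rankOne {H : Type*} [NormedAddCommGroup H] [InnerProductSpace ℝ H]
    (h f : H) : H →L[ℝ] H :=
  (innerSL ℝ h).smulRight f

section

variable {H : Type*} [NormedAddCommGroup H] [InnerProductSpace ℝ H]

@[simp]
lemma rankOne_apply (h f x : H) : rankOne h f x = ⟪h, x⟫ • f := rfl

lemma inner_hessian_apply (Γ : H →L[ℝ] H) (g x : H) :
    ⟪x, ((4:ℝ) • (‖g‖ ^ 2 • ContinuousLinearMap.id ℝ H + (2:ℝ) • rankOne g g - Γ)) x⟫ =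
      4 * (‖g‖ ^ 2 * ‖x‖ ^ 2 + 2 * ⟪g, x⟫ ^ 2 - ⟪x, Γ x⟫) := by
  simp only [smul_apply, sub_apply, add_apply, ContinuousLinearMap.id_apply, rankOne_apply,
    inner_smul_right, inner_sub_right, inner_add_right, real_inner_self_eq_norm_sq,
    real_inner_comm x g]
  ring

lemma sq_inner_sub_le_two_mul_sq_inner (v w x : H) :
    ⟪v, x⟫ ^ 2 - 2 * (‖w - v‖ * ‖x‖) ^ 2 ≤ 2 * ⟪w, x⟫ ^ 2 := by
  have hdev : ⟪w - v, x⟫ ^ 2 ≤ (‖w - v‖ * ‖x‖) ^ 2 :=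
    sq_le_sq' (neg_le_of_abs_le (abs_real_inner_le_norm _ _)) (real_inner_le_norm _ _)
  rw [inner_sub_left] at hdev
  -- `2 (u + e)² - u² + 2 e² = (u + 2 e)²` with `u = ⟪v, x⟫`, `e = ⟪w, x⟫ - ⟪v, x⟫`
  nlinarith [sq_nonneg (2 * ⟪w, x⟫ - ⟪v, x⟫)]

variable {ι : Type*}

lemma HilbertBasis.hasSum_sq_inner (f : HilbertBasis ι ℝ H) (x : H) :
    HasSum (fun i => ⟪(f i : H), x⟫ ^ 2) (‖x‖ ^ 2) := by
  simpa [sq, real_inner_comm x, real_inner_self_eq_norm_sq] using f.hasSum_inner_mul_inner x x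

lemma HilbertBasis.hasSum_inner_apply_of_apply_eq_smul (f : HilbertBasis ι ℝ H) (μ : ι → ℝ)
    (Γ : H →L[ℝ] H) (hΓ : ∀ i, Γ (f i) = μ i • (f i : H)) (x : H) :
    HasSum (fun i => μ i * ⟪(f i : H), x⟫ ^ 2) ⟪x, Γ x⟫ := by
  have h := ((f.hasSum_repr x).mapL Γ).mapL (innerSL ℝ x)
  simp only [f.repr_apply_apply, real_inner_comm x, map_smul, hΓ, coe_innerSL_apply,
    smul_eq_mul] at h
  have hterm : (fun i => μ i * ⟪(f i : H), x⟫ ^ 2) = fun i => ⟪x, f i⟫ * (μ i * ⟪x, f i⟫) :=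
    funext fun i => by rw [real_inner_comm]; ring
  rwa [hterm]

lemma HilbertBasis.inner_apply_le_of_apply_eq_smul (f : HilbertBasis ι ℝ H) (μ : ι → ℝ)
    (Γ : H →L[ℝ] H) (hΓ : ∀ i, Γ (f i) = μ i • (f i : H)) (i₀ : ι) {M : ℝ}
    (hM : ∀ i ≠ i₀, μ i ≤ M) (x : H) :
    ⟪x, Γ x⟫ ≤ M * ‖x‖ ^ 2 + (μ i₀ - M) * ⟪(f i₀ : H), x⟫ ^ 2 := by
  classical
  refine hasSum_le (fun i => ?_) (f.hasSum_inner_apply_of_apply_eq_smul μ Γ hΓ x)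
    (((f.hasSum_sq_inner x).mul_left M).add
      ((hasSum_ite_eq i₀ (⟪(f i₀ : H), x⟫ ^ 2)).mul_left (μ i₀ - M)))
  by_cases hi : i = i₀
  · rw [if_pos hi, hi]
    linarith
  · simp only [if_neg hi, mul_zero, add_zero]
    exact mul_le_mul_of_nonneg_right (hM i hi) (sq_nonneg _)

end

theorem stmt6_general {H : Type*} [NormedAddCommGroup H] [InnerProductSpace ℝ H] [CompleteSpace H]
    (f : HilbertBasis ℕ ℝ H) (μ : ℕ → ℝ)
    (hnn : ∀ ℓ, 0 ≤ μ ℓ) (hanti : Antitone μ)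
    (Γ : H →L[ℝ] H) (hΓ : ∀ ℓ, Γ (f ℓ) = μ ℓ • (f ℓ : H))
    (η : ℝ) (hη : 8 * η < Real.sqrt (μ 0) - Real.sqrt (μ 1))
    (g : H) (hg : ‖g - Real.sqrt (μ 0) • (f 0 : H)‖ < η) (x : H) :
    4 * Real.sqrt (μ 0) * ((Real.sqrt (μ 0) - Real.sqrt (μ 1)) - 8 * η) * ‖x‖ ^ 2 ≤
      ⟪x, ((4:ℝ) • (‖g‖ ^ 2 • ContinuousLinearMap.id ℝ H + (2:ℝ) • rankOne g g - Γ)) x⟫ := by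
  rw [inner_hessian_apply]
  set a := Real.sqrt (μ 0)
  set b := Real.sqrt (μ 1)
  set c := ⟪(f 0 : H), x⟫
  have hb : 0 ≤ b := Real.sqrt_nonneg _
  have hba : b ≤ a := Real.sqrt_le_sqrt (hanti (Nat.zero_le 1))
  have hη₀ : 0 ≤ η := (norm_nonneg _).trans hg.le
  have hΓx : ⟪x, Γ x⟫ ≤ b ^ 2 * ‖x‖ ^ 2 + (a ^ 2 - b ^ 2) * c ^ 2 := by
    rw [Real.sq_sqrt (hnn 0), Real.sq_sqrt (hnn 1)]
    exact f.inner_apply_le_of_apply_eq_smul μ Γ hΓ 0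
      (fun i hi => hanti (Nat.one_le_iff_ne_zero.2 hi)) x
  have hg_norm : a - η ≤ ‖g‖ := by
    have := norm_sub_norm_le (a • (f 0 : H)) g
    rw [norm_sub_rev, norm_smul, f.orthonormal.1 0, Real.norm_of_nonneg (Real.sqrt_nonneg _),
      mul_one] at this
    linarith
  have hgx : a ^ 2 * c ^ 2 - 2 * η ^ 2 * ‖x‖ ^ 2 ≤ 2 * ⟪g, x⟫ ^ 2 := by
    have := sq_inner_sub_le_two_mul_sq_inner (a • (f 0 : H)) g x
    have hdev : (‖g - a • (f 0 : H)‖ * ‖x‖) ^ 2 ≤ (η * ‖x‖) ^ 2 := by gcongr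
    rw [real_inner_smul_left] at this
    linarith
  have hg_sq : (a - η) ^ 2 * ‖x‖ ^ 2 ≤ ‖g‖ ^ 2 * ‖x‖ ^ 2 := by gcongr; linarith
  linarith [mul_nonneg (mul_nonneg hb (sub_nonneg.2 hba)) (sq_nonneg ‖x‖),
    mul_nonneg (mul_nonneg hη₀ (by linarith : 0 ≤ 6 * a - η)) (sq_nonneg ‖x‖),
    mul_nonneg (sq_nonneg b) (sq_nonneg c)]

/-- Let `Γ = ∑_ℓ μ_ℓ f_ℓ ⊗ f_ℓ` with orthonormal eigenbasis `(f_ℓ)` and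
eigenvalues `μ₀ > μ₁ ≥ μ₂ ≥ ... ≥ 0`. Set `g₁ = √μ₀ f₀` and `ρ = √μ₀ − √μ₁`,
and suppose `8η < ρ`. Then for every `g` with `‖g − g₁‖ < η` and every `x`,
`⟨x, R̈(g)(x)⟩ ≥ 4√μ₀ (ρ − 8η) ‖x‖²`, where `R̈(g) = 4(‖g‖² I + 2 g⊗g − Γ)`. -/
theorem stmt6 {H : Type*} [NormedAddCommGroup H] [InnerProductSpace ℝ H] [CompleteSpace H]
    (f : HilbertBasis ℕ ℝ H) (μ : ℕ → ℝ)
    (hnn : ∀ ℓ, 0 ≤ μ ℓ) (hanti : Antitone μ) (hgap : μ 1 < μ 0)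
    (Γ : H →L[ℝ] H) (hΓ : ∀ ℓ, Γ (f ℓ) = μ ℓ • (f ℓ : H))
    (η : ℝ) (hη : 8 * η < Real.sqrt (μ 0) - Real.sqrt (μ 1))
    (g : H) (hg : ‖g - Real.sqrt (μ 0) • (f 0 : H)‖ < η) (x : H) :
    4 * Real.sqrt (μ 0) * ((Real.sqrt (μ 0) - Real.sqrt (μ 1)) - 8 * η) * ‖x‖ ^ 2 ≤
      ⟪x, ((4:ℝ) • (‖g‖ ^ 2 • ContinuousLinearMap.id ℝ H + (2:ℝ) • rankOne g g - Γ)) x⟫ :=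
  stmt6_general f μ hnn hanti Γ hΓ η hη g hg x
end

section
/- Let φ(t) = exp(−1/(1−t²)) on (−1,1) (extended by 0) and define φ̃(t) = ϕ(4t−3) for t ∈ [1/2,1), −ϕ(4t−1) for t ∈ (0,1/2), and 0 otherwise. For p ≥ 3, take x = 1 if (p−1)/2 is an integer and x = (p−1)/(p−2) if p/2 is an integer, and set q = (p−1)/(2x) (an integer). Then with t_k = k/(p−1), the Riemann sum Σ_{k=0}^{p−1} φ̃(x t_k) equals 0. -/
/-- The standard smooth bump function `φ(t) = exp(−1/(1−t²)) 1_{(−1,1)}(t)`. -/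
noncomputable def bump (t : ℝ) : ℝ :=
  if -1 < t ∧ t < 1 then Real.exp (-1 / (1 - t ^ 2)) else 0

/-- The antisymmetric bump `φ̃`: `φ(4t−3)` on `[1/2,1)`, `−φ(4t−1)` on `(0,1/2)`,
and `0` elsewhere. -/
noncomputable def phiTilde (t : ℝ) : ℝ :=
  if 1/2 ≤ t ∧ t < 1 then bump (4 * t - 3)
  else if 0 < t ∧ t < 1/2 then -(bump (4 * t - 1))
  else 0

/-!
Reflecting the grid `k / n` through `1/2` permutes it, and `φ̃(1 - t) = -φ̃(t)`, so a sum of `φ̃`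
over the whole grid equals its own negative. For odd `p` the points `t_k` form the grid with
`n = p - 1`; for even `p` the rescaled points `x t_k = k / (p - 2)` form the grid with `n = p - 2`
plus one extra point `(p - 1)/(p - 2) > 1`, where `φ̃` vanishes.
-/

open Finset

lemma sum_range_succ_eq_zero_of_reflect {M : Type*} [AddCommGroup M] [IsAddTorsionFree M]
    (g : ℕ → M) (n : ℕ) (hg : ∀ k ≤ n, g (n - k) = -g k) :
    ∑ k ∈ range (n + 1), g k = 0 := by
  have hself : ∑ k ∈ range (n + 1), g k = ∑ k ∈ range (n + 1), -g k := by
    rw [← sum_range_reflect]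
    refine sum_congr rfl fun k hk => ?_
    rw [Nat.add_sub_cancel, hg k (Nat.lt_succ_iff.mp (mem_range.mp hk))]
  rwa [sum_neg_distrib, self_eq_neg] at hself

lemma sum_range_succ_div_eq_zero_of_reflect {M : Type*} [AddCommGroup M] [IsAddTorsionFree M]
    (f : ℝ → M) (hf : ∀ t, f (1 - t) = -f t) {n : ℕ} (hn : n ≠ 0) :
    ∑ k ∈ range (n + 1), f (k / n) = 0 := by
  refine sum_range_succ_eq_zero_of_reflect _ n fun k hk => ?_
  rw [← hf, Nat.cast_sub hk, sub_div, div_self (Nat.cast_ne_zero.mpr hn)]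

lemma bump_neg (t : ℝ) : bump (-t) = bump t := by
  have hiff : (-1 < -t ∧ -t < 1) ↔ (-1 < t ∧ t < 1) := by
    constructor <;> rintro ⟨h1, h2⟩ <;> constructor <;> linarith
  simp only [bump, neg_sq, hiff]

lemma bump_neg_one : bump (-1) = 0 :=
  if_neg fun h => lt_irrefl _ h.1

lemma phiTilde_of_nonpos {t : ℝ} (ht : t ≤ 0) : phiTilde t = 0 := by
  rw [phiTilde, if_neg (by rintro ⟨h, _⟩; linarith), if_neg (by rintro ⟨h, _⟩; linarith)]

lemma phiTilde_of_one_le {t : ℝ} (ht : 1 ≤ t) : phiTilde t = 0 := by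
  rw [phiTilde, if_neg (by rintro ⟨_, h⟩; linarith), if_neg (by rintro ⟨_, h⟩; linarith)]

lemma phiTilde_one_sub (t : ℝ) : phiTilde (1 - t) = -phiTilde t := by
  rcases le_or_gt t 0 with h0 | h0
  · rw [phiTilde_of_nonpos h0, phiTilde_of_one_le (by linarith), neg_zero]
  rcases le_or_gt 1 t with h1 | h1
  · rw [phiTilde_of_one_le h1, phiTilde_of_nonpos (by linarith), neg_zero]
  rcases lt_trichotomy t (1 / 2) with h | rfl | h
  · rw [phiTilde, phiTilde, if_pos ⟨by linarith, by linarith⟩,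
      if_neg (by rintro ⟨h', _⟩; linarith), if_pos ⟨h0, h⟩,
      show 4 * (1 - t) - 3 = -(4 * t - 1) by ring, bump_neg, neg_neg]
  · norm_num [phiTilde, bump_neg_one]
  · rw [phiTilde, phiTilde, if_neg (by rintro ⟨h', _⟩; linarith),
      if_pos ⟨by linarith, by linarith⟩, if_pos ⟨by linarith, h1⟩,
      show 4 * (1 - t) - 1 = -(4 * t - 3) by ring, bump_neg]

/-- For `p ≥ 3`, with `x = 1` if `p` is odd and `x = (p−1)/(p−2)` if `p`
is even, and grid points `t_k = k/(p−1)`, the Riemann sum `∑_{k<p} φ̃(x t_k)` vanishes. -/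
theorem stmt8 (p : ℕ) (hp : 3 ≤ p) (x : ℝ)
    (hx : (Odd p ∧ x = 1) ∨ (Even p ∧ x = ((p : ℝ) - 1) / ((p : ℝ) - 2))) :
    ∑ k ∈ Finset.range p, phiTilde (x * ((k : ℝ) / ((p : ℝ) - 1))) = 0 := by
  obtain ⟨n, rfl⟩ : ∃ n, p = n + 3 := ⟨p - 3, by omega⟩
  have hgrid (m : ℕ) : ∑ k ∈ range (m + 2), phiTilde (k / ((m : ℝ) + 1)) = 0 := by
    simpa using sum_range_succ_div_eq_zero_of_reflect phiTilde phiTilde_one_sub m.succ_ne_zero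
  push_cast at hx ⊢
  rcases hx with ⟨-, rfl⟩ | ⟨-, rfl⟩
  · have hn : (n : ℝ) + 3 - 1 = ((n + 1 : ℕ) : ℝ) + 1 := by push_cast; ring
    simp only [one_mul, hn]
    exact hgrid (n + 1)
  · have hscale (k : ℕ) :
        ((n : ℝ) + 3 - 1) / ((n : ℝ) + 3 - 2) * (k / ((n : ℝ) + 3 - 1)) = k / ((n : ℝ) + 1) := by
      rw [show (n : ℝ) + 3 - 1 = n + 2 by ring, show (n : ℝ) + 3 - 2 = n + 1 by ring]
      field_simp
    have hlast : phiTilde ((n + 2 : ℕ) / ((n : ℝ) + 1)) = 0 :=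
      phiTilde_of_one_le <| by rw [le_div_iff₀ (by positivity)]; push_cast; linarith
    simp only [hscale]
    rw [sum_range_succ, hgrid n, hlast, add_zero]
end

section
/- Let μ₁ > 0, f₁, f̂ be unit vectors of a Hilbert space H with ⟨f̂,f₁⟩ ≥ 0, g₁ = √μ₁ f₁ and ĝ = ‖ĝ‖ f̂ any element of H with ⟨ĝ,g₁⟩ = ‖ĝ‖‖g₁‖⟨f̂,f₁⟩. If ‖ĝ − g₁‖ ≤ ‖g₁‖/2, then ‖f̂ − f₁‖² ≤ 2 ‖ĝ − g₁‖² / μ₁. -/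
/-!
Write `ĝ = a f̂` and `g₁ = b f₁` with `a, b ≥ 0`. For unit vectors,
`‖a f̂ − b f₁‖² = (a − b)² + a b ‖f̂ − f₁‖²`, and the reverse triangle inequality gives
`a ≥ b − ‖ĝ − g₁‖ ≥ b / 2`. Hence `‖ĝ − g₁‖² ≥ (b² / 2) ‖f̂ − f₁‖²` with `b² = μ₁`.
-/

open RealInnerProductSpace

section UnitVectors

variable {H : Type*} [NormedAddCommGroup H] [InnerProductSpace ℝ H] {u v : H}

theorem norm_smul_sub_smul_sq_of_norm_eq_one (a b : ℝ) (hu : ‖u‖ = 1) (hv : ‖v‖ = 1) :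
    ‖a • u - b • v‖ ^ 2 = (a - b) ^ 2 + a * b * ‖u - v‖ ^ 2 := by
  rw [norm_sub_sq_real, norm_sub_sq_real, norm_smul, norm_smul, real_inner_smul_left,
    real_inner_smul_right, hu, hv, mul_one, mul_one, Real.norm_eq_abs, Real.norm_eq_abs, sq_abs, sq_abs]
  ring

theorem sub_norm_smul_sub_smul_mul_le {a b : ℝ} (ha : 0 ≤ a) (hb : 0 ≤ b)
    (hu : ‖u‖ = 1) (hv : ‖v‖ = 1) :
    (b - ‖a • u - b • v‖) * b * ‖u - v‖ ^ 2 ≤ ‖a • u - b • v‖ ^ 2 := by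
  have hba : b - ‖a • u - b • v‖ ≤ a := by
    have := norm_sub_norm_le (b • v) (a • u)
    rw [norm_sub_rev, norm_smul, norm_smul, hu, hv, Real.norm_of_nonneg ha,
      Real.norm_of_nonneg hb] at this
    linarith
  calc (b - ‖a • u - b • v‖) * b * ‖u - v‖ ^ 2
      ≤ a * b * ‖u - v‖ ^ 2 := by gcongr
    _ ≤ (a - b) ^ 2 + a * b * ‖u - v‖ ^ 2 := le_add_of_nonneg_left (sq_nonneg _)
    _ = ‖a • u - b • v‖ ^ 2 := (norm_smul_sub_smul_sq_of_norm_eq_one a b hu hv).symm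

end UnitVectors

theorem stmt16_general {H : Type*} [NormedAddCommGroup H] [InnerProductSpace ℝ H]
    (μ₁ : ℝ) (hμ : 0 < μ₁) (f₁ fh g₁ gh : H)
    (hf₁ : ‖f₁‖ = 1) (hfh : ‖fh‖ = 1)
    (hg₁ : g₁ = Real.sqrt μ₁ • f₁) (hgh : gh = ‖gh‖ • fh)
    (hclose : ‖gh - g₁‖ ≤ ‖g₁‖ / 2) :
    ‖fh - f₁‖ ^ 2 ≤ 2 * ‖gh - g₁‖ ^ 2 / μ₁ := by
  have hnorm : ‖g₁‖ = Real.sqrt μ₁ := by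
    rw [hg₁, norm_smul, hf₁, mul_one, Real.norm_of_nonneg (Real.sqrt_nonneg _)]
  have hμ_eq : μ₁ = ‖g₁‖ ^ 2 := by rw [hnorm, Real.sq_sqrt hμ.le]
  have key := sub_norm_smul_sub_smul_mul_le (norm_nonneg gh) (Real.sqrt_nonneg μ₁) hfh hf₁
  rw [← hgh, ← hg₁, ← hnorm] at key
  rw [le_div_iff₀ hμ]
  calc ‖fh - f₁‖ ^ 2 * μ₁ = 2 * (‖g₁‖ / 2 * ‖g₁‖ * ‖fh - f₁‖ ^ 2) := by rw [hμ_eq]; ring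
    _ ≤ 2 * ((‖g₁‖ - ‖gh - g₁‖) * ‖g₁‖ * ‖fh - f₁‖ ^ 2) := by gcongr; linarith
    _ ≤ 2 * ‖gh - g₁‖ ^ 2 := by gcongr

/-- Let `μ₁ > 0`, `f₁, f̂` unit vectors with `⟨f̂,f₁⟩ ≥ 0`,
`g₁ = √μ₁ f₁` and `ĝ = ‖ĝ‖ f̂`. If `‖ĝ − g₁‖ ≤ ‖g₁‖/2`, then
`‖f̂ − f₁‖² ≤ 2‖ĝ − g₁‖²/μ₁`. -/
theorem stmt16 {H : Type*} [NormedAddCommGroup H] [InnerProductSpace ℝ H]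
    (μ₁ : ℝ) (hμ : 0 < μ₁) (f₁ fh g₁ gh : H)
    (hf₁ : ‖f₁‖ = 1) (hfh : ‖fh‖ = 1) (hpos : 0 ≤ ⟪fh, f₁⟫)
    (hg₁ : g₁ = Real.sqrt μ₁ • f₁) (hgh : gh = ‖gh‖ • fh)
    (hclose : ‖gh - g₁‖ ≤ ‖g₁‖ / 2) :
    ‖fh - f₁‖ ^ 2 ≤ 2 * ‖gh - g₁‖ ^ 2 / μ₁ :=
  stmt16_general μ₁ hμ f₁ fh g₁ gh hf₁ hfh hg₁ hgh hclose
end
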